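/- arXiv:2401.00584 — 2 statements merged into one kernel-verified Lean document; each statement's English description precedes it below -/
import Mathlib

section
/- Let t be a semibounded form and let Q_c, Q_{c'} be representing maps for t − c and t − c' with c, c' ≤ m(t). Then Q_c*Q_c + c = Q_{c'}*Q_{c'} + c' and Q_c*Q_c** + c = Q_{c'}*(Q_{c'})** + c' as linear relations in H; i.e., the relations S_t and Ã_t are independent of the choice of the constant c and of the representing map. -/
open Filter Topology
open scoped ComplexOrder

noncomputable section

variable {H K K' : Type*}

/-- Sesquilinear forms with domain `D`: linear in the first argument,
conjugate-linear in the second. -/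
abbrev Form [NormedAddCommGroup H] [InnerProductSpace ℂ H] (D : Submodule ℂ H) : Type _ :=
  ↥D →ₗ[ℂ] (↥D →ₛₗ[starRingEnd ℂ] ℂ)

section Defs

variable [NormedAddCommGroup H] [InnerProductSpace ℂ H]
  [NormedAddCommGroup K] [InnerProductSpace ℂ K]
  {D : Submodule ℂ H}

/-- `t[φ,φ] ≥ c‖φ‖²` on the domain (in the complex order, so diagonal values are real). -/
def BddBelowBy (t : Form D) (c : ℝ) : Prop :=
  ∀ φ : ↥D, (↑(c * ‖(φ : H)‖ ^ 2) : ℂ) ≤ t φ φ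

/-- The set of Rayleigh quotients of the form `t`; its infimum is the lower bound `m(t)`. -/
def rayleighSet (t : Form D) : Set ℝ :=
  {r : ℝ | ∃ φ : ↥D, (φ : H) ≠ 0 ∧ r = (t φ φ).re / ‖(φ : H)‖ ^ 2}

/-- `Q` is a representing map for the form `t - c` :
`t[φ,ψ] - c(φ,ψ) = (Qφ,Qψ)` (forms/inner products linear in the first entry). -/
def IsRepMap (t : Form D) (c : ℝ) (Q : ↥D →ₗ[ℂ] K) : Prop :=
  ∀ φ ψ : ↥D, t φ ψ - (c : ℂ) * (inner ℂ (ψ : H) (φ : H) : ℂ) = (inner ℂ (Q ψ) (Q φ) : ℂ)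

/-- The graph of a partially defined operator. -/
def graphOf (Q : ↥D →ₗ[ℂ] K) : Set (H × K) :=
  Set.range fun φ : ↥D => ((φ : H), Q φ)

/-- `Q` is a closed operator. -/
def OpClosed (Q : ↥D →ₗ[ℂ] K) : Prop := IsClosed (graphOf Q)

/-- `Q` is closable: the closure of its graph is again a graph. -/
def OpClosable (Q : ↥D →ₗ[ℂ] K) : Prop :=
  ∀ k : K, ((0 : H), k) ∈ closure (graphOf Q) → k = 0

/-- `Q` is singular: `ran Q ⊆ mul Q**`, equivalently every `(φ,0)` with `φ ∈ dom Q`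
belongs to the closure of the graph. -/
def OpSingular (Q : ↥D →ₗ[ℂ] K) : Prop :=
  ∀ φ : ↥D, ((φ : H), (0 : K)) ∈ closure (graphOf Q)

/-- `φ n →_t x` : convergence in `H` together with `t[φ_n - φ_m] → 0`. -/
def TConv (t : Form D) (φ : ℕ → ↥D) (x : H) : Prop :=
  Tendsto (fun n => (φ n : H)) atTop (nhds x) ∧
    Tendsto (fun p : ℕ × ℕ => t (φ p.1 - φ p.2) (φ p.1 - φ p.2)) (atTop ×ˢ atTop) (nhds 0)

/-- The form `t` is closable. -/
def FormClosable (t : Form D) : Prop :=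
  ∀ φ : ℕ → ↥D, TConv t φ 0 → Tendsto (fun n => t (φ n) (φ n)) atTop (nhds 0)

/-- The form `t` is closed. -/
def FormClosed (t : Form D) : Prop :=
  ∀ (φ : ℕ → ↥D) (x : H), TConv t φ x →
    ∃ hx : x ∈ D, Tendsto (fun n => t (φ n - ⟨x, hx⟩) (φ n - ⟨x, hx⟩)) atTop (nhds 0)

/-- The (nonnegative) form `t` is singular. -/
def FormSingular (t : Form D) : Prop :=
  ∀ ψ : ↥D, ∃ φ : ℕ → ↥D,
    Tendsto (fun n => (φ n : H)) atTop (nhds (ψ : H)) ∧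
      Tendsto (fun n => t (φ n) (φ n)) atTop (nhds 0)

end Defs

section Defs2

variable [NormedAddCommGroup H] [InnerProductSpace ℂ H]

/-- Order on forms: `t₁ ≤ t₂` iff `dom t₂ ⊆ dom t₁` and `t₁[φ] ≤ t₂[φ]` on `dom t₂`. -/
def FormLE {D₁ D₂ : Submodule ℂ H} (t₁ : Form D₁) (t₂ : Form D₂) : Prop :=
  ∃ h : D₂ ≤ D₁, ∀ φ : ↥D₂, t₁ ⟨(φ : H), h φ.2⟩ ⟨(φ : H), h φ.2⟩ ≤ t₂ φ φ

/-- `s` is an extension of the form `t` (`t ⊂ s`). -/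
def FormExtends {D₁ D₂ : Submodule ℂ H} (s : Form D₂) (t : Form D₁) : Prop :=
  ∃ h : D₁ ≤ D₂, ∀ φ ψ : ↥D₁, s ⟨(φ : H), h φ.2⟩ ⟨(ψ : H), h ψ.2⟩ = t φ ψ

/-- `r` is the regular part of `s` : a closable semibounded form below `s`
which dominates every closable semibounded form below `s`. -/
def IsRegularPart {D : Submodule ℂ H} (s r : Form D) : Prop :=
  FormClosable r ∧ (∃ c, BddBelowBy r c) ∧ FormLE r s ∧
    ∀ (Du : Submodule ℂ H) (u : Form Du), FormClosable u → (∃ cu, BddBelowBy u cu) →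
      FormLE u s → FormLE u r

end Defs2

section Rel

variable [NormedAddCommGroup H] [InnerProductSpace ℂ H]
  [NormedAddCommGroup K] [InnerProductSpace ℂ K] {D : Submodule ℂ H}

/-- A symmetric relation in `H`: `⟨φ',ψ⟩ = ⟨φ,ψ'⟩` for all members. -/
def IsSymmRel (R : Set (H × H)) : Prop :=
  ∀ p ∈ R, ∀ q ∈ R, (inner ℂ q.1 p.2 : ℂ) = (inner ℂ q.2 p.1 : ℂ)

/-- The adjoint of a linear relation in `H`. -/
def adjRelSet (R : Set (H × H)) : Set (H × H) :=
  {q | ∀ p ∈ R, (inner ℂ q.1 p.2 : ℂ) = (inner ℂ q.2 p.1 : ℂ)}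

/-- The relation `Q*Q + c` in `H`. -/
def StRel (Q : ↥D →ₗ[ℂ] K) (c : ℝ) : Set (H × H) :=
  {p | ∃ h : p.1 ∈ D, ∀ ψ : ↥D,
    (inner ℂ (Q ψ) (Q ⟨p.1, h⟩) : ℂ) = (inner ℂ (ψ : H) (p.2 - (c : ℂ) • p.1) : ℂ)}

/-- The relation `Q*Q** + c` in `H`, where `Q**` is the closure of the graph of `Q`. -/
def ARel (Q : ↥D →ₗ[ℂ] K) (c : ℝ) : Set (H × H) :=
  {p | ∃ g : K, (p.1, g) ∈ closure (graphOf Q) ∧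
    ∀ ψ : ↥D, (inner ℂ (Q ψ) g : ℂ) = (inner ℂ (ψ : H) (p.2 - (c : ℂ) • p.1) : ℂ)}

end Rel

/-!
Subtracting the defining identities of two representing maps of the same form gives
`(Q'ψ, Q'φ) = (Qψ, Qφ) + (c - c')(ψ, φ)`, so `Q*Q + c` and `Q'*Q' + c'` agree. The same identity
gives `‖Q'φ‖ ≤ ‖Qφ‖ + √|c - c'| ‖φ‖`: a sequence that converges in the graph norm of `Q` also
converges in that of `Q'`, which transports points of the closed graph of `Q` to points of the
closed graph of `Q'` while preserving the defining equation of `Q*Q** + c`.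
-/

section RepMap

variable [NormedAddCommGroup H] [InnerProductSpace ℂ H]
  [NormedAddCommGroup K] [InnerProductSpace ℂ K]
  [NormedAddCommGroup K'] [InnerProductSpace ℂ K']
  {D : Submodule ℂ H} {t : Form D} {c c' : ℝ}
  {Q : ↥D →ₗ[ℂ] K} {Q' : ↥D →ₗ[ℂ] K'}

lemma mem_closure_graphOf_iff {x : H} {g : K} :
    (x, g) ∈ closure (graphOf Q) ↔ ∃ φ : ℕ → ↥D, Tendsto (fun n => (φ n : H)) atTop (𝓝 x) ∧
      Tendsto (fun n => Q (φ n)) atTop (𝓝 g) := by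
  constructor
  · intro hxg
    obtain ⟨u, hu, hlim⟩ := mem_closure_iff_seq_limit.mp hxg
    choose φ hφ using hu
    have hlim' : Tendsto (fun n => ((φ n : H), Q (φ n))) atTop (𝓝 (x, g)) := by
      simpa only [hφ] using hlim
    exact ⟨φ, (continuous_fst.tendsto _).comp hlim', (continuous_snd.tendsto _).comp hlim'⟩
  · rintro ⟨φ, hx, hg⟩
    exact mem_closure_of_tendsto (hx.prodMk_nhds hg) (Eventually.of_forall fun n => ⟨φ n, rfl⟩)

lemma inner_sub_smul_add_mul_inner (ψ x y : H) (c c' : ℝ) :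
    (inner ℂ ψ (y - (c : ℂ) • x) : ℂ) + ((c : ℂ) - c') * inner ℂ ψ x =
      inner ℂ ψ (y - (c' : ℂ) • x) := by
  simp only [inner_sub_right, inner_smul_right]
  ring

namespace IsRepMap

lemma inner_eq (hQ : IsRepMap t c Q) (hQ' : IsRepMap t c' Q') (φ ψ : ↥D) :
    (inner ℂ (Q' ψ) (Q' φ) : ℂ) =
      inner ℂ (Q ψ) (Q φ) + ((c : ℂ) - c') * inner ℂ (ψ : H) (φ : H) := by
  linear_combination hQ φ ψ - hQ' φ ψ

lemma norm_sq_eq (hQ : IsRepMap t c Q) (hQ' : IsRepMap t c' Q') (φ : ↥D) :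
    ‖Q' φ‖ ^ 2 = ‖Q φ‖ ^ 2 + (c - c') * ‖(φ : H)‖ ^ 2 := by
  rw [← inner_self_eq_norm_sq (𝕜 := ℂ), ← inner_self_eq_norm_sq (𝕜 := ℂ),
    ← inner_self_eq_norm_sq (𝕜 := ℂ), hQ.inner_eq hQ' φ φ]
  simp [Complex.mul_re]

lemma norm_le (hQ : IsRepMap t c Q) (hQ' : IsRepMap t c' Q') (φ : ↥D) :
    ‖Q' φ‖ ≤ ‖Q φ‖ + √|c - c'| * ‖(φ : H)‖ := by
  have hsq : √|c - c'| ^ 2 = |c - c'| := Real.sq_sqrt (abs_nonneg _)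
  refine le_of_sq_le_sq ?_ (by positivity)
  rw [hQ.norm_sq_eq hQ' φ]
  nlinarith [mul_le_mul_of_nonneg_right (le_abs_self (c - c')) (sq_nonneg ‖(φ : H)‖),
    mul_nonneg (mul_nonneg (norm_nonneg (Q φ)) (Real.sqrt_nonneg |c - c'|)) (norm_nonneg (φ : H))]

lemma cauchySeq_comp (hQ : IsRepMap t c Q) (hQ' : IsRepMap t c' Q') {φ : ℕ → ↥D}
    (hφ : CauchySeq fun n => (φ n : H)) (hQφ : CauchySeq fun n => Q (φ n)) :
    CauchySeq fun n => Q' (φ n) := by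
  rw [cauchySeq_iff_tendsto_dist_atTop_0] at hφ hQφ ⊢
  refine squeeze_zero (fun _ => dist_nonneg) (fun p => ?_)
    (by simpa using hQφ.add (hφ.const_mul √|c - c'|))
  simpa only [dist_eq_norm, ← map_sub, Submodule.coe_sub] using hQ.norm_le hQ' (φ p.1 - φ p.2)

lemma stRel_subset (hQ : IsRepMap t c Q) (hQ' : IsRepMap t c' Q') :
    StRel Q c ⊆ StRel Q' c' := by
  rintro p ⟨hp, hpQ⟩
  refine ⟨hp, fun ψ => ?_⟩
  rw [hQ.inner_eq hQ' ⟨p.1, hp⟩ ψ, hpQ ψ, inner_sub_smul_add_mul_inner]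

lemma exists_mem_closure_graphOf [CompleteSpace K'] (hQ : IsRepMap t c Q)
    (hQ' : IsRepMap t c' Q') {x : H} {g : K} (hxg : (x, g) ∈ closure (graphOf Q)) :
    ∃ g' : K', (x, g') ∈ closure (graphOf Q') ∧ ∀ ψ : ↥D, (inner ℂ (Q' ψ) g' : ℂ) =
      inner ℂ (Q ψ) g + ((c : ℂ) - c') * inner ℂ (ψ : H) x := by
  obtain ⟨φ, hx, hg⟩ := mem_closure_graphOf_iff.mp hxg
  obtain ⟨g', hg'⟩ :=
    cauchySeq_tendsto_of_complete (hQ.cauchySeq_comp hQ' hx.cauchySeq hg.cauchySeq)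
  refine ⟨g', mem_closure_graphOf_iff.mpr ⟨φ, hx, hg'⟩,
    fun ψ => tendsto_nhds_unique (tendsto_const_nhds.inner hg') ?_⟩
  simp only [hQ.inner_eq hQ' _ ψ]
  exact (tendsto_const_nhds.inner hg).add ((tendsto_const_nhds.inner hx).const_mul _)

lemma aRel_subset [CompleteSpace K'] (hQ : IsRepMap t c Q) (hQ' : IsRepMap t c' Q') :
    ARel Q c ⊆ ARel Q' c' := by
  rintro p ⟨g, hg, hpQ⟩
  obtain ⟨g', hg', hinner⟩ := hQ.exists_mem_closure_graphOf hQ' hg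
  exact ⟨g', hg', fun ψ => by rw [hinner ψ, hpQ ψ, inner_sub_smul_add_mul_inner]⟩

end IsRepMap

end RepMap

theorem statement18_general [NormedAddCommGroup H] [InnerProductSpace ℂ H]
    [NormedAddCommGroup K] [InnerProductSpace ℂ K] [CompleteSpace K]
    [NormedAddCommGroup K'] [InnerProductSpace ℂ K'] [CompleteSpace K']
    {D : Submodule ℂ H} (t : Form D) (c c' : ℝ)
    (Q : ↥D →ₗ[ℂ] K) (Q' : ↥D →ₗ[ℂ] K')
    (hQ : IsRepMap t c Q) (hQ' : IsRepMap t c' Q') :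
    StRel Q c = StRel Q' c' ∧ ARel Q c = ARel Q' c' :=
  ⟨(hQ.stRel_subset hQ').antisymm (hQ'.stRel_subset hQ),
    (hQ.aRel_subset hQ').antisymm (hQ'.aRel_subset hQ)⟩

/-- the relations `S_t = Q_c*Q_c + c` and `Ã_t = Q_c*Q_c** + c` do not
depend on the choice of `c ≤ m(t)` nor on the representing map. -/
theorem statement18 [NormedAddCommGroup H] [InnerProductSpace ℂ H] [CompleteSpace H]
    [NormedAddCommGroup K] [InnerProductSpace ℂ K] [CompleteSpace K]
    [NormedAddCommGroup K'] [InnerProductSpace ℂ K'] [CompleteSpace K']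
    {D : Submodule ℂ H} (t : Form D) (m c c' : ℝ)
    (hm : IsGLB (rayleighSet t) m) (hc : c ≤ m) (hc' : c' ≤ m)
    (Q : ↥D →ₗ[ℂ] K) (Q' : ↥D →ₗ[ℂ] K')
    (hQ : IsRepMap t c Q) (hQ' : IsRepMap t c' Q') :
    StRel Q c = StRel Q' c' ∧ ARel Q c = ARel Q' c' :=
  statement18_general t c c' Q Q' hQ hQ'
end
end

section
/- Let t_n be a sequence of semibounded forms on H with t_m ≤ t_n for m ≤ n (i.e., dom t_n ⊂ dom t_m and t_m[φ] ≤ t_n[φ] on dom t_n). Then there exists a semibounded form t with dom t = {φ ∈ ∩_n dom t_n : sup_n t_n[φ] < ∞} such that t_n ≤ t for all n and t_n[φ] ↗ t[φ] for every φ ∈ dom t. Moreover, if u is a semibounded form with t_n ≤ u for all n, then t ≤ u; if every t_n is closable then t is closable; if every t_n is closed then t is closed. -/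
open Filter Topology
open scoped ComplexOrder

noncomputable section

variable {H K K' : Type*}

/-!
The diagonal values `tₙ[φ]` are nondecreasing in `n`, so they converge exactly where they are
bounded, and by polarization the off-diagonal values converge there too; the limit is `t`.

For closability and closedness, let `c` bound `t₀` (hence every `tₙ` and `t`) from below and
write `qₙ = tₙ - c`, `q = t - c`. These are nonnegative, so the parallelogram law gives
`qₙ[a + b] ≤ 2 qₙ[a] + 2 qₙ[b]`. If `φ` is `t`-Cauchy and `qₙ[φₖ - x] → 0` for every `n`, then
`qₙ[φₖ - x] ≤ 2 q[φₖ - φⱼ] + 2 qₙ[φⱼ - x]`, and letting `j → ∞` shows that this convergence is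
uniform in `n`. Uniformity bounds `supₙ tₙ[x]`, so `x ∈ dom t`, and gives `q[φₖ - x] → 0`.
-/

section Sesquilinear

variable {α E : Type*} [AddCommGroup E] [Module ℂ E]

lemma sesq_polarization (t : E →ₗ[ℂ] E →ₛₗ[starRingEnd ℂ] ℂ) (x y : E) :
    4 * t x y = t (x + y) (x + y) - t (x - y) (x - y)
      + Complex.I * t (x + Complex.I • y) (x + Complex.I • y)
      - Complex.I * t (x - Complex.I • y) (x - Complex.I • y) := by
  simp only [map_add, map_sub, map_smul, LinearMap.map_smulₛₗ, LinearMap.add_apply,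
    LinearMap.sub_apply, LinearMap.smul_apply, smul_eq_mul, Complex.conj_I]
  ring_nf
  simp only [Complex.I_sq]
  ring

lemma sesq_apply_add_self_add_apply_sub_self (t : E →ₗ[ℂ] E →ₛₗ[starRingEnd ℂ] ℂ) (x y : E) :
    t (x + y) (x + y) + t (x - y) (x - y) = 2 * t x x + 2 * t y y := by
  simp only [map_add, map_sub, LinearMap.add_apply, LinearMap.sub_apply]
  ring

lemma sesq_apply_smul_self (t : E →ₗ[ℂ] E →ₛₗ[starRingEnd ℂ] ℂ) (c : ℂ) (x : E) :
    t (c • x) (c • x) = (Complex.normSq c : ℂ) * t x x := by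
  rw [LinearMap.map_smul, LinearMap.smul_apply, LinearMap.map_smulₛₗ, smul_eq_mul, smul_eq_mul,
    ← mul_assoc, Complex.mul_conj]

lemma exists_tendsto_sesq_of_tendsto_apply_self {l : Filter α} [l.NeBot]
    (s : α → E →ₗ[ℂ] E →ₛₗ[starRingEnd ℂ] ℂ)
    (h : ∀ x, ∃ L, Tendsto (fun a => s a x x) l (𝓝 L)) :
    ∃ t : E →ₗ[ℂ] E →ₛₗ[starRingEnd ℂ] ℂ, ∀ x y, Tendsto (fun a => s a x y) l (𝓝 (t x y)) := by
  choose L hL using h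
  have hlim : ∀ x y, Tendsto (fun a => s a x y) l (𝓝 ((L (x + y) - L (x - y)
      + Complex.I * L (x + Complex.I • y) - Complex.I * L (x - Complex.I • y)) / 4)) := by
    intro x y
    refine (((((hL _).sub (hL _)).add ((hL _).const_mul _)).sub
      ((hL _).const_mul _)).div_const 4).congr fun a => ?_
    rw [← sesq_polarization]
    ring
  choose T hT using fun x y => (⟨_, hlim x y⟩ : ∃ T, Tendsto (fun a => s a x y) l (𝓝 T))
  let right (x : E) : E →ₛₗ[starRingEnd ℂ] ℂ :=
    linearMapOfTendsto (T x) (fun a => s a x) (tendsto_pi_nhds.2 (hT x))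
  let t : E →ₗ[ℂ] E →ₛₗ[starRingEnd ℂ] ℂ :=
    { toFun := right
      map_add' := fun x x' => LinearMap.ext fun y => tendsto_nhds_unique (hT (x + x') y)
        (((hT x y).add (hT x' y)).congr fun a => by simp)
      map_smul' := fun c x => LinearMap.ext fun y => tendsto_nhds_unique (hT (c • x) y)
        (((hT x y).const_mul c).congr fun a => by simp) }
  exact ⟨t, hT⟩

end Sesquilinear

section Semibounded

variable [NormedAddCommGroup H] [InnerProductSpace ℂ H] {D D₁ D₂ : Submodule ℂ H}

lemma BddBelowBy.im_eq_zero {t : Form D} {c : ℝ} (h : BddBelowBy t c) (φ : ↥D) :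
    (t φ φ).im = 0 :=
  ((Complex.le_def.mp (h φ)).2).symm.trans (Complex.ofReal_im _)

lemma BddBelowBy.le_re {t : Form D} {c : ℝ} (h : BddBelowBy t c) (φ : ↥D) :
    c * ‖(φ : H)‖ ^ 2 ≤ (t φ φ).re := by
  have := (Complex.le_def.mp (h φ)).1
  rwa [Complex.ofReal_re] at this

lemma BddBelowBy.ofReal_re {t : Form D} {c : ℝ} (h : BddBelowBy t c) (φ : ↥D) :
    ((t φ φ).re : ℂ) = t φ φ :=
  Complex.ext rfl (by simp [h.im_eq_zero φ])

lemma FormLE.re_le {t₁ : Form D₁} {t₂ : Form D₂} (h : FormLE t₁ t₂) (φ : ↥D₂) :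
    (t₁ ⟨φ, h.1 φ.2⟩ ⟨φ, h.1 φ.2⟩).re ≤ (t₂ φ φ).re :=
  (Complex.le_def.mp (h.2 φ)).1

lemma BddBelowBy.mono {t₁ : Form D₁} {t₂ : Form D₂} {c : ℝ} (h : BddBelowBy t₁ c)
    (hle : FormLE t₁ t₂) : BddBelowBy t₂ c :=
  fun φ => (h ⟨φ, hle.1 φ.2⟩).trans (hle.2 φ)

/-- The diagonal `(t - c)[φ]` of the shifted form. -/
def shiftedQuad (t : Form D) (c : ℝ) (φ : ↥D) : ℝ := (t φ φ).re - c * ‖(φ : H)‖ ^ 2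

lemma shiftedQuad_nonneg {t : Form D} {c : ℝ} (h : BddBelowBy t c) (φ : ↥D) :
    0 ≤ shiftedQuad t c φ :=
  sub_nonneg.mpr (h.le_re φ)

lemma shiftedQuad_neg (t : Form D) (c : ℝ) (φ : ↥D) :
    shiftedQuad t c (-φ) = shiftedQuad t c φ := by
  simp [shiftedQuad]

lemma BddBelowBy.re_apply_add_self_le {t : Form D} {c : ℝ} (h : BddBelowBy t c) (φ ψ : ↥D) :
    (t (φ + ψ) (φ + ψ)).re ≤ 2 * (t φ φ).re + 2 * (t ψ ψ).re - c * ‖(φ : H) - ψ‖ ^ 2 := by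
  have hform := congrArg Complex.re (sesq_apply_add_self_add_apply_sub_self t φ ψ)
  simp only [Complex.add_re, Complex.mul_re, Complex.re_ofNat, Complex.im_ofNat, zero_mul,
    sub_zero] at hform
  have hsub := h.le_re (φ - ψ)
  rw [Submodule.coe_sub] at hsub
  linarith

lemma shiftedQuad_add_le {t : Form D} {c : ℝ} (h : BddBelowBy t c) (φ ψ : ↥D) :
    shiftedQuad t c (φ + ψ) ≤ 2 * shiftedQuad t c φ + 2 * shiftedQuad t c ψ := by
  unfold shiftedQuad
  linear_combination h.re_apply_add_self_le φ ψ - c * parallelogram_law_with_norm ℂ (φ : H) ψ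

lemma BddBelowBy.tendsto_apply_self_zero_iff {α : Type*} {l : Filter α} {t : Form D} {c : ℝ}
    (h : BddBelowBy t c) {f : α → ↥D} (hf : Tendsto (fun a => (f a : H)) l (𝓝 0)) :
    Tendsto (fun a => t (f a) (f a)) l (𝓝 0) ↔
      Tendsto (fun a => shiftedQuad t c (f a)) l (𝓝 0) := by
  have hnorm : Tendsto (fun a => c * ‖(f a : H)‖ ^ 2) l (𝓝 0) := by
    simpa using ((hf.norm.pow 2).const_mul c)
  have hreal : (fun a => t (f a) (f a)) = fun a => ((t (f a) (f a)).re : ℂ) :=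
    funext fun a => (h.ofReal_re _).symm
  rw [hreal, ← Complex.ofReal_zero, tendsto_ofReal_iff]
  refine ⟨fun hre => by simpa [shiftedQuad] using hre.sub hnorm, fun hq => ?_⟩
  simpa [shiftedQuad] using hq.add hnorm

lemma TConv.tendsto_coe_sub {t : Form D} {φ : ℕ → ↥D} {x : H} (h : TConv t φ x) :
    Tendsto (fun p : ℕ × ℕ => ((φ p.1 - φ p.2 : ↥D) : H)) (atTop ×ˢ atTop) (𝓝 0) := by
  simpa using (h.1.comp tendsto_fst).sub (h.1.comp tendsto_snd)

lemma TConv.tendsto_shiftedQuad {t : Form D} {c : ℝ} (hb : BddBelowBy t c) {φ : ℕ → ↥D} {x : H}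
    (h : TConv t φ x) :
    Tendsto (fun p : ℕ × ℕ => shiftedQuad t c (φ p.1 - φ p.2)) (atTop ×ˢ atTop) (𝓝 0) :=
  (hb.tendsto_apply_self_zero_iff h.tendsto_coe_sub).mp h.2

end Semibounded

section LimitDomain

variable [NormedAddCommGroup H] [InnerProductSpace ℂ H] {ι : Type*} {Dn : ι → Submodule ℂ H}

def limDom (tn : ∀ i, Form (Dn i)) (c : ℝ) (hc : ∀ i, BddBelowBy (tn i) c) :
    Submodule ℂ H where
  carrier := {x | ∃ hx : ∀ i, x ∈ Dn i,
    BddAbove (Set.range fun i => (tn i ⟨x, hx i⟩ ⟨x, hx i⟩).re)}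
  zero_mem' := ⟨fun i => zero_mem _, 0, by
    rintro _ ⟨i, rfl⟩
    simp [show (⟨0, zero_mem _⟩ : ↥(Dn i)) = 0 from rfl]⟩
  add_mem' := by
    rintro x y ⟨hx, bx, hbx⟩ ⟨hy, by', hby⟩
    refine ⟨fun i => add_mem (hx i) (hy i), 2 * bx + 2 * by' - c * ‖x - y‖ ^ 2, ?_⟩
    rintro _ ⟨i, rfl⟩
    refine ((hc i).re_apply_add_self_le ⟨x, hx i⟩ ⟨y, hy i⟩).trans ?_
    linarith [hbx ⟨i, rfl⟩, hby ⟨i, rfl⟩]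
  smul_mem' := by
    rintro a x ⟨hx, bx, hbx⟩
    refine ⟨fun i => Submodule.smul_mem _ a (hx i), Complex.normSq a * bx, ?_⟩
    rintro _ ⟨i, rfl⟩
    change (tn i (a • ⟨x, hx i⟩) (a • ⟨x, hx i⟩)).re ≤ _
    rw [sesq_apply_smul_self, Complex.re_ofReal_mul]
    exact mul_le_mul_of_nonneg_left (hbx ⟨i, rfl⟩) (Complex.normSq_nonneg a)

variable {tn : ∀ i, Form (Dn i)} {c : ℝ} {hc : ∀ i, BddBelowBy (tn i) c}

lemma mem_limDom {x : H} : x ∈ limDom tn c hc ↔ ∃ hx : ∀ i, x ∈ Dn i,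
    BddAbove (Set.range fun i => (tn i ⟨x, hx i⟩ ⟨x, hx i⟩).re) :=
  Iff.rfl

lemma limDom_le (i : ι) : limDom tn c hc ≤ Dn i := fun _ hx => (mem_limDom.mp hx).1 i

end LimitDomain

lemma eventually_forall_le_of_le_two_mul_add {ι : Type*} {a : ι → ℕ → ℝ} {S : ℕ → ℕ → ℝ}
    (htri : ∀ n k j, a n k ≤ 2 * S k j + 2 * a n j)
    (hS : Tendsto (fun p : ℕ × ℕ => S p.1 p.2) (atTop ×ˢ atTop) (𝓝 0))
    (ha : ∀ n, Tendsto (a n) atTop (𝓝 0)) {ε : ℝ} (hε : 0 < ε) :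
    ∀ᶠ k in atTop, ∀ n, a n k ≤ ε := by
  have hSε := hS.eventually (gt_mem_nhds (half_pos hε))
  rw [prod_atTop_atTop_eq] at hSε
  obtain ⟨K, hK⟩ := eventually_atTop_prod_self.mp hSε
  refine eventually_atTop.mpr ⟨K, fun k hk n => ?_⟩
  have hlim : Tendsto (fun j => a n k - 2 * a n j) atTop (𝓝 (a n k)) := by
    simpa using tendsto_const_nhds.sub ((ha n).const_mul 2)
  refine le_of_tendsto hlim (eventually_atTop.mpr ⟨K, fun j hj => ?_⟩)
  linarith [htri n k j, hK k j hk hj]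

section LimitForm

variable [NormedAddCommGroup H] [InnerProductSpace ℂ H] {Dn : ℕ → Submodule ℂ H}
  {tn : ∀ n, Form (Dn n)} {c : ℝ} (hc : ∀ n, BddBelowBy (tn n) c)

local notation "ι" n => Submodule.inclusion (limDom_le (hc := hc) n)

lemma exists_tendsto_apply_self_limDom (hmono : ∀ m n, m ≤ n → FormLE (tn m) (tn n))
    (φ : ↥(limDom tn c hc)) :
    ∃ L, Tendsto (fun n => tn n ((ι n) φ) ((ι n) φ)) atTop (𝓝 L) := by
  obtain ⟨hx, hbdd⟩ := mem_limDom.mp φ.2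
  have hre := tendsto_atTop_ciSup (fun m n hmn => (hmono m n hmn).re_le ⟨_, hx n⟩) hbdd
  exact ⟨_, (Complex.continuous_ofReal.tendsto _).comp hre |>.congr fun n => (hc n).ofReal_re _⟩

def limForm (hmono : ∀ m n, m ≤ n → FormLE (tn m) (tn n)) : Form (limDom tn c hc) :=
  (exists_tendsto_sesq_of_tendsto_apply_self
    (fun n => ((tn n).comp (ι n)).compl₂ (ι n))
    (exists_tendsto_apply_self_limDom hc hmono)).choose

variable (hmono : ∀ m n, m ≤ n → FormLE (tn m) (tn n))

lemma tendsto_limForm (φ ψ : ↥(limDom tn c hc)) :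
    Tendsto (fun n => tn n ((ι n) φ) ((ι n) ψ)) atTop (𝓝 (limForm hc hmono φ ψ)) :=
  (exists_tendsto_sesq_of_tendsto_apply_self
    (fun n => ((tn n).comp (ι n)).compl₂ (ι n))
    (exists_tendsto_apply_self_limDom hc hmono)).choose_spec φ ψ

lemma formLE_limForm (n : ℕ) : FormLE (tn n) (limForm hc hmono) :=
  ⟨limDom_le n, fun φ => Monotone.ge_of_tendsto (fun m k hmk => (hmono m k hmk).2 ((ι k) φ))
    (tendsto_limForm hc hmono φ φ) n⟩

lemma bddBelowBy_limForm : BddBelowBy (limForm hc hmono) c :=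
  (hc 0).mono (formLE_limForm hc hmono 0)

lemma limForm_le {Du : Submodule ℂ H} (u : Form Du) (hu : ∀ n, FormLE (tn n) u) :
    FormLE (limForm hc hmono) u := by
  have hDu : Du ≤ limDom tn c hc := fun x hx =>
    mem_limDom.mpr ⟨fun n => (hu n).1 hx, (u ⟨x, hx⟩ ⟨x, hx⟩).re,
      by rintro _ ⟨n, rfl⟩; exact (hu n).re_le ⟨x, hx⟩⟩
  exact ⟨hDu, fun φ => le_of_tendsto' (tendsto_limForm hc hmono _ _) fun n => (hu n).2 φ⟩

lemma tendsto_shiftedQuad_limForm (φ : ↥(limDom tn c hc)) :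
    Tendsto (fun n => shiftedQuad (tn n) c ((ι n) φ)) atTop
      (𝓝 (shiftedQuad (limForm hc hmono) c φ)) :=
  ((Complex.continuous_re.tendsto _).comp (tendsto_limForm hc hmono φ φ)).sub_const _

lemma shiftedQuad_le_limForm (n : ℕ) (φ : ↥(limDom tn c hc)) :
    shiftedQuad (tn n) c ((ι n) φ) ≤ shiftedQuad (limForm hc hmono) c φ :=
  sub_le_sub_right ((formLE_limForm hc hmono n).re_le φ) _

lemma exists_mem_limDom_tendsto_shiftedQuad {φ : ℕ → ↥(limDom tn c hc)} {x : H}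
    (hx : ∀ n, x ∈ Dn n)
    (hφ : Tendsto (fun p : ℕ × ℕ => shiftedQuad (limForm hc hmono) c (φ p.1 - φ p.2))
      (atTop ×ˢ atTop) (𝓝 0))
    (hn : ∀ n, Tendsto (fun k => shiftedQuad (tn n) c ((ι n) (φ k) - ⟨x, hx n⟩)) atTop (𝓝 0)) :
    ∃ hxl : x ∈ limDom tn c hc,
      Tendsto (fun k => shiftedQuad (limForm hc hmono) c (φ k - ⟨x, hxl⟩)) atTop (𝓝 0) := by
  have htri : ∀ n k j, shiftedQuad (tn n) c ((ι n) (φ k) - ⟨x, hx n⟩) ≤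
      2 * shiftedQuad (limForm hc hmono) c (φ k - φ j) +
        2 * shiftedQuad (tn n) c ((ι n) (φ j) - ⟨x, hx n⟩) := fun n k j => by
    have h := shiftedQuad_add_le (hc n) ((ι n) (φ k - φ j)) ((ι n) (φ j) - ⟨x, hx n⟩)
    have hsum : (ι n) (φ k - φ j) + ((ι n) (φ j) - ⟨x, hx n⟩) = (ι n) (φ k) - ⟨x, hx n⟩ := by
      rw [map_sub, sub_add_sub_cancel]
    rw [hsum] at h
    linarith [shiftedQuad_le_limForm hc hmono n (φ k - φ j)]
  have hunif := fun ε (hε : (0 : ℝ) < ε) =>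
    eventually_forall_le_of_le_two_mul_add htri hφ hn hε
  obtain ⟨K, hK⟩ := (hunif 1 one_pos).exists
  have hxl : x ∈ limDom tn c hc := by
    refine mem_limDom.mpr ⟨hx, 2 * shiftedQuad (limForm hc hmono) c (φ K) + 2 + c * ‖x‖ ^ 2, ?_⟩
    rintro _ ⟨n, rfl⟩
    have h := shiftedQuad_add_le (hc n) ((ι n) (φ K)) (⟨x, hx n⟩ - (ι n) (φ K))
    rw [add_sub_cancel, ← neg_sub, shiftedQuad_neg] at h
    have hxq : shiftedQuad (tn n) c ⟨x, hx n⟩ = (tn n ⟨x, hx n⟩ ⟨x, hx n⟩).re - c * ‖x‖ ^ 2 :=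
      rfl
    change (tn n ⟨x, hx n⟩ ⟨x, hx n⟩).re ≤ _
    linarith [shiftedQuad_le_limForm hc hmono n (φ K), hK n]
  refine ⟨hxl, tendsto_order.mpr ⟨fun a ha => Eventually.of_forall fun k =>
    ha.trans_le (shiftedQuad_nonneg (bddBelowBy_limForm hc hmono) _), fun ε hε => ?_⟩⟩
  filter_upwards [hunif (ε / 2) (half_pos hε)] with k hk
  exact (le_of_tendsto (tendsto_shiftedQuad_limForm hc hmono _)
    (Eventually.of_forall hk)).trans_lt (half_lt_self hε)

lemma TConv.inclusion_of_limForm {φ : ℕ → ↥(limDom tn c hc)} {x : H}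
    (h : TConv (limForm hc hmono) φ x) (n : ℕ) : TConv (tn n) (fun k => (ι n) (φ k)) x :=
  ⟨h.1, ((hc n).tendsto_apply_self_zero_iff h.tendsto_coe_sub).mpr <|
    squeeze_zero (fun _ => shiftedQuad_nonneg (hc n) _)
      (fun p => shiftedQuad_le_limForm hc hmono n (φ p.1 - φ p.2))
      (h.tendsto_shiftedQuad (bddBelowBy_limForm hc hmono))⟩

lemma formClosable_limForm (h : ∀ n, FormClosable (tn n)) :
    FormClosable (limForm hc hmono) := by
  intro φ hφ
  have hmk0 : ∀ {D : Submodule ℂ H}, (⟨0, zero_mem D⟩ : ↥D) = 0 := rfl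
  have hn : ∀ n, Tendsto (fun k => shiftedQuad (tn n) c ((ι n) (φ k) - ⟨0, zero_mem _⟩))
      atTop (𝓝 0) := fun n => by
    simpa only [hmk0, sub_zero] using ((hc n).tendsto_apply_self_zero_iff hφ.1).mp
      (h n _ (TConv.inclusion_of_limForm hc hmono hφ n))
  obtain ⟨_, hlim⟩ := exists_mem_limDom_tendsto_shiftedQuad hc hmono (fun n => zero_mem _)
    (hφ.tendsto_shiftedQuad (bddBelowBy_limForm hc hmono)) hn
  simp only [hmk0, sub_zero] at hlim
  exact ((bddBelowBy_limForm hc hmono).tendsto_apply_self_zero_iff hφ.1).mpr hlim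

lemma formClosed_limForm (h : ∀ n, FormClosed (tn n)) : FormClosed (limForm hc hmono) := by
  intro φ x hφ
  choose hx hxn using fun n => h n _ x (TConv.inclusion_of_limForm hc hmono hφ n)
  have hsub : Tendsto (fun k => (φ k : H) - x) atTop (𝓝 0) := by
    simpa using hφ.1.sub_const x
  obtain ⟨hxl, hlim⟩ := exists_mem_limDom_tendsto_shiftedQuad hc hmono hx
    (hφ.tendsto_shiftedQuad (bddBelowBy_limForm hc hmono))
    fun n => ((hc n).tendsto_apply_self_zero_iff hsub).mp (hxn n)
  exact ⟨hxl, ((bddBelowBy_limForm hc hmono).tendsto_apply_self_zero_iff hsub).mpr hlim⟩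

end LimitForm

theorem statement19_general [NormedAddCommGroup H] [InnerProductSpace ℂ H]
    (Dn : ℕ → Submodule ℂ H) (tn : ∀ n, Form (Dn n))
    (hsb : ∀ n, ∃ c, BddBelowBy (tn n) c)
    (hmono : ∀ m n, m ≤ n → FormLE (tn m) (tn n)) :
    ∃ (Dl : Submodule ℂ H) (t : Form Dl),
      (∃ c, BddBelowBy t c) ∧
      (∀ x : H, x ∈ Dl ↔ ∃ hx : ∀ n, x ∈ Dn n,
        BddAbove (Set.range fun n => (tn n ⟨x, hx n⟩ ⟨x, hx n⟩).re)) ∧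
      (∀ n, FormLE (tn n) t) ∧
      (∀ (φ : ↥Dl) (hmem : ∀ n, (φ : H) ∈ Dn n),
        Monotone (fun n => (tn n ⟨(φ : H), hmem n⟩ ⟨(φ : H), hmem n⟩).re) ∧
        Tendsto (fun n => tn n ⟨(φ : H), hmem n⟩ ⟨(φ : H), hmem n⟩) atTop
          (nhds (t φ φ))) ∧
      (∀ (Du : Submodule ℂ H) (u : Form Du), (∀ n, FormLE (tn n) u) → FormLE t u) ∧
      ((∀ n, FormClosable (tn n)) → FormClosable t) ∧
      ((∀ n, FormClosed (tn n)) → FormClosed t) := by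
  obtain ⟨c, hc₀⟩ := hsb 0
  have hc : ∀ n, BddBelowBy (tn n) c := fun n => hc₀.mono (hmono 0 n n.zero_le)
  exact ⟨limDom tn c hc, limForm hc hmono, ⟨c, bddBelowBy_limForm hc hmono⟩,
    fun _ => mem_limDom, formLE_limForm hc hmono,
    fun φ hmem => ⟨fun m n hmn => (hmono m n hmn).re_le ⟨φ, hmem n⟩,
      tendsto_limForm hc hmono φ φ⟩,
    fun _ u hu => limForm_le hc hmono u hu, formClosable_limForm hc hmono,
    formClosed_limForm hc hmono⟩

/-- a nondecreasing sequence of semibounded forms has a limit form `t`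
with the stated domain, which is the least upper bound, monotone limit of the `t_n`,
and inherits closability/closedness. -/
theorem statement19 [NormedAddCommGroup H] [InnerProductSpace ℂ H] [CompleteSpace H]
    (Dn : ℕ → Submodule ℂ H) (tn : ∀ n, Form (Dn n))
    (hsb : ∀ n, ∃ c, BddBelowBy (tn n) c)
    (hmono : ∀ m n, m ≤ n → FormLE (tn m) (tn n)) :
    ∃ (Dl : Submodule ℂ H) (t : Form Dl),
      (∃ c, BddBelowBy t c) ∧
      (∀ x : H, x ∈ Dl ↔ ∃ hx : ∀ n, x ∈ Dn n,
        BddAbove (Set.range fun n => (tn n ⟨x, hx n⟩ ⟨x, hx n⟩).re)) ∧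
      (∀ n, FormLE (tn n) t) ∧
      (∀ (φ : ↥Dl) (hmem : ∀ n, (φ : H) ∈ Dn n),
        Monotone (fun n => (tn n ⟨(φ : H), hmem n⟩ ⟨(φ : H), hmem n⟩).re) ∧
        Tendsto (fun n => tn n ⟨(φ : H), hmem n⟩ ⟨(φ : H), hmem n⟩) atTop
          (nhds (t φ φ))) ∧
      (∀ (Du : Submodule ℂ H) (u : Form Du), (∀ n, FormLE (tn n) u) → FormLE t u) ∧
      ((∀ n, FormClosable (tn n)) → FormClosable t) ∧
      ((∀ n, FormClosed (tn n)) → FormClosed t) :=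
  statement19_general Dn tn hsb hmono
end
end
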